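/- Let G₆ be the subgroup of G₇ generated by s and u, let Z₆ = {1, z³, z⁶, z⁹}, U = {1, u, u²}, and X₆ = {1, s, s·u, s·u·s}. Then the map Z₆ × U × X₆ → G₆ sending (y, v, x) to y·v·x is a bijection onto G₆; in particular every element of G₆ is uniquely expressible as y·v·x with y ∈ Z₆, v ∈ U, x ∈ X₆. -/

import Mathlib

/-!
With `c = (su)³`, the relations `s² = u³ = 1`, `(su)³ = (us)³` of `G₆` make `c` commute with
`s` and `u` and force `c⁴ = 1`. The set of words `cⁱ uʲ x` with `x ∈ X₆ = {1, s, su, sus}` is closed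
under right multiplication by `s`, which permutes `X₆`, and by `u`, since `su² = c³ u sus` and
`(su)² = c u² s`; so it is all of `G₆`. In `G₇` one has `(su)³ = z³`, and the 48 words are
distinct because their images in a two-dimensional representation of `G₇` over `𝔽₁₃` are.
-/

open Pointwise

namespace Tetra

def rels : Set (FreeGroup (Fin 3)) :=
  { FreeGroup.of 0 ^ 2, FreeGroup.of 1 ^ 3, FreeGroup.of 2 ^ 3,
    FreeGroup.of 0 * FreeGroup.of 1 * FreeGroup.of 2 *
      (FreeGroup.of 1 * FreeGroup.of 2 * FreeGroup.of 0)⁻¹,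
    FreeGroup.of 0 * FreeGroup.of 1 * FreeGroup.of 2 *
      (FreeGroup.of 2 * FreeGroup.of 0 * FreeGroup.of 1)⁻¹ }

/-- The group `G₇ = ⟨s, t, u | s² = t³ = u³ = 1, stu = tus = ust⟩`. -/
abbrev G7 := PresentedGroup rels

def s : G7 := PresentedGroup.of 0
def t : G7 := PresentedGroup.of 1
def u : G7 := PresentedGroup.of 2
def z : G7 := s * t * u

def G6 : Subgroup G7 := Subgroup.closure {s, u}

end Tetra

section NormalForm

variable {M N : Type*} [Monoid M] [Monoid N]

def transversal (s u : M) : Fin 4 → M := ![1, s, s * u, s * u * s]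

def normalFormFactors (s u : M) (p : Fin 4 × Fin 3 × Fin 4) : M × M × M :=
  (((s * u) ^ 3) ^ (p.1 : ℕ), u ^ (p.2.1 : ℕ), transversal s u p.2.2)

def tripleProd (p : M × M × M) : M := p.1 * p.2.1 * p.2.2

def normalForm (s u : M) : Fin 4 × Fin 3 × Fin 4 → M := tripleProd ∘ normalFormFactors s u

theorem normalForm_apply (s u : M) (i : Fin 4) (j : Fin 3) (k : Fin 4) :
    normalForm s u (i, j, k) = ((s * u) ^ 3) ^ (i : ℕ) * u ^ (j : ℕ) * transversal s u k :=
  rfl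

theorem range_normalFormFactors (s u : M) :
    Set.range (normalFormFactors s u) =
      ({1, (s * u) ^ 3, ((s * u) ^ 3) ^ 2, ((s * u) ^ 3) ^ 3} : Set M) ×ˢ
        (({1, u, u ^ 2} : Set M) ×ˢ ({1, s, s * u, s * u * s} : Set M)) := by
  have : normalFormFactors s u = Prod.map (fun i : Fin 4 => ((s * u) ^ 3) ^ (i : ℕ))
      (Prod.map (fun j : Fin 3 => u ^ (j : ℕ)) (transversal s u)) := rfl
  rw [this, Set.range_prodMap, Set.range_prodMap]
  congr 2
  · ext; simp [Fin.exists_fin_succ, eq_comm]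
  · ext; simp [Fin.exists_fin_succ, eq_comm]
  · simp only [transversal, Matrix.range_cons, Matrix.range_empty, Set.union_empty,
      Set.singleton_union]

theorem MonoidHom.map_normalForm (f : M →* N) (s u : M) (p : Fin 4 × Fin 3 × Fin 4) :
    f (normalForm s u p) = normalForm (f s) (f u) p := by
  obtain ⟨i, j, k⟩ := p
  fin_cases k <;> simp [normalForm_apply, transversal]

end NormalForm

section G6Relations

variable {G : Type*} [Group G] {s u : G}

structure G6Relations (s u : G) : Prop where
  sq_eq_one : s ^ 2 = 1
  pow_three_eq_one : u ^ 3 = 1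
  braid : (s * u) ^ 3 = (u * s) ^ 3

namespace G6Relations

theorem s_mul_s (h : G6Relations s u) : s * s = 1 := by
  rw [← sq, h.sq_eq_one]

theorem s_mul_s_mul (h : G6Relations s u) (x : G) : s * (s * x) = x := by
  rw [← mul_assoc, h.s_mul_s, one_mul]

theorem u_mul_u_mul_u (h : G6Relations s u) : u * (u * u) = 1 := by
  rw [← pow_three, h.pow_three_eq_one]

theorem u_mul_u_mul_u_mul (h : G6Relations s u) (x : G) : u * (u * (u * x)) = x := by
  rw [← mul_assoc, ← mul_assoc, mul_assoc u, h.u_mul_u_mul_u, one_mul]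

theorem commute_s (h : G6Relations s u) : Commute ((s * u) ^ 3) s :=
  calc (s * u) ^ 3 * s = s * (u * s) ^ 3 := by simp only [pow_succ, pow_zero, one_mul, mul_assoc]
    _ = s * (s * u) ^ 3 := by rw [h.braid]

theorem commute_u (h : G6Relations s u) : Commute ((s * u) ^ 3) u :=
  calc (s * u) ^ 3 * u = (u * s) ^ 3 * u := by rw [h.braid]
    _ = u * (s * u) ^ 3 := by simp only [pow_succ, pow_zero, one_mul, mul_assoc]

theorem pow_twelve_eq_one (h : G6Relations s u) : (s * u) ^ 12 = 1 := by
  -- `g = (su)²u` has `g² = (su)⁶` and `sgs = g⁻¹`; as `s` commutes with `(su)⁶`, `(su)⁶ = (su)⁻⁶`.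
  set g := (s * u) ^ 2 * u
  have hg : g ^ 2 = ((s * u) ^ 3) ^ 2 := by
    calc g ^ 2 = (s * u) ^ 2 * ((u * s) ^ 3 * (s * u)) := by
          simp only [g, pow_succ, pow_zero, one_mul, mul_assoc, h.s_mul_s_mul]
      _ = ((s * u) ^ 3) ^ 2 := by rw [← h.braid, ← pow_succ, ← pow_add, ← pow_mul]
  have hsg : s * g * s = g⁻¹ := eq_inv_of_mul_eq_one_left <| by
    simp only [g, pow_succ, pow_zero, one_mul, mul_assoc, h.s_mul_s_mul, h.u_mul_u_mul_u_mul,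
      h.u_mul_u_mul_u]
  have hg_inv : (g ^ 2)⁻¹ = g ^ 2 :=
    calc (g ^ 2)⁻¹ = (s * g * s) ^ 2 := by rw [hsg, inv_pow]
      _ = s * g ^ 2 * s := by simp only [sq, mul_assoc, h.s_mul_s_mul]
      _ = g ^ 2 := by rw [hg, ← (h.commute_s.pow_left 2).eq, mul_assoc, h.s_mul_s, mul_one]
  calc (s * u) ^ 12 = (g ^ 2)⁻¹ * g ^ 2 := by rw [hg_inv, ← sq, hg, ← pow_mul, ← pow_mul]
    _ = 1 := inv_mul_cancel _

theorem s_mul_u_mul_u (h : G6Relations s u) :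
    s * u * u = ((s * u) ^ 3) ^ 3 * u * (s * u * s) := by
  have key : (s * u) ^ 3 * (s * u * u) = u * (s * u * s) := by
    rw [h.braid]
    simp only [pow_succ, pow_zero, one_mul, mul_one, mul_assoc, h.s_mul_s_mul, h.u_mul_u_mul_u]
  calc s * u * u = ((s * u) ^ 3) ^ 3 * ((s * u) ^ 3 * (s * u * u)) := by
        rw [← mul_assoc, ← pow_succ, ← pow_mul, h.pow_twelve_eq_one, one_mul]
    _ = ((s * u) ^ 3) ^ 3 * u * (s * u * s) := by rw [key, ← mul_assoc]

theorem s_mul_u_mul_s_mul_u (h : G6Relations s u) : s * u * s * u = (s * u) ^ 3 * u ^ 2 * s := by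
  simp only [pow_succ, pow_zero, one_mul, mul_one, mul_assoc, h.s_mul_s, h.u_mul_u_mul_u_mul]

theorem transversal_mul_s (h : G6Relations s u) (k : Fin 4) :
    ∃ k', transversal s u k * s = transversal s u k' := by
  fin_cases k
  · exact ⟨1, by simp [transversal]⟩
  · exact ⟨0, by simp [transversal, h.s_mul_s]⟩
  · exact ⟨3, by simp [transversal]⟩
  · exact ⟨2, by simp [transversal, mul_assoc, h.s_mul_s]⟩

theorem transversal_mul_u (h : G6Relations s u) (k : Fin 4) :
    ∃ (a b : ℕ) (k' : Fin 4),
      transversal s u k * u = ((s * u) ^ 3) ^ a * u ^ b * transversal s u k' := by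
  fin_cases k
  · exact ⟨0, 1, 0, by simp [transversal]⟩
  · exact ⟨0, 0, 2, by simp [transversal]⟩
  · exact ⟨3, 1, 3, by simpa [transversal] using h.s_mul_u_mul_u⟩
  · exact ⟨1, 2, 1, by simpa [transversal] using h.s_mul_u_mul_s_mul_u⟩

theorem mem_range_normalForm (h : G6Relations s u) (a b : ℕ) (k : Fin 4) :
    ((s * u) ^ 3) ^ a * u ^ b * transversal s u k ∈ Set.range (normalForm s u) := by
  have hc : ((s * u) ^ 3) ^ 4 = 1 := by rw [← pow_mul]; exact h.pow_twelve_eq_one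
  refine ⟨(⟨a % 4, Nat.mod_lt _ four_pos⟩, ⟨b % 3, Nat.mod_lt _ three_pos⟩, k), ?_⟩
  rw [normalForm_apply, pow_eq_pow_mod a hc, pow_eq_pow_mod b h.pow_three_eq_one]

theorem normalForm_mul_s_mem (h : G6Relations s u) (p : Fin 4 × Fin 3 × Fin 4) :
    normalForm s u p * s ∈ Set.range (normalForm s u) := by
  obtain ⟨i, j, k⟩ := p
  obtain ⟨k', hk⟩ := h.transversal_mul_s k
  exact ⟨(i, j, k'), by rw [normalForm_apply, normalForm_apply, ← hk, ← mul_assoc]⟩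

theorem normalForm_mul_u_mem (h : G6Relations s u) (p : Fin 4 × Fin 3 × Fin 4) :
    normalForm s u p * u ∈ Set.range (normalForm s u) := by
  obtain ⟨i, j, k⟩ := p
  obtain ⟨a, b, k', hk⟩ := h.transversal_mul_u k
  have hc : Commute (((s * u) ^ 3) ^ a) (u ^ (j : ℕ)) := (h.commute_u.pow_left a).pow_right j
  convert h.mem_range_normalForm (i + a) (j + b) k' using 1
  rw [normalForm_apply, mul_assoc, hk, pow_add, pow_add]
  simp only [mul_assoc]
  rw [← mul_assoc (u ^ (j : ℕ)), ← hc.eq, mul_assoc]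

theorem range_normalForm (h : G6Relations s u) :
    Set.range (normalForm s u) = Subgroup.closure {s, u} := by
  have hs : s ∈ Subgroup.closure {s, u} := Subgroup.subset_closure (by simp)
  have hu : u ∈ Subgroup.closure {s, u} := Subgroup.subset_closure (by simp)
  refine subset_antisymm ?_ fun g hg => ?_
  · rintro _ ⟨⟨i, j, k⟩, rfl⟩
    have hk : transversal s u k ∈ Subgroup.closure {s, u} := by
      fin_cases k <;> simp [transversal, mul_mem, hs, hu]
    exact mul_mem (mul_mem (pow_mem (pow_mem (mul_mem hs hu) 3) _) (pow_mem hu _)) hk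
  induction hg using Subgroup.closure_induction_right with
  | one => exact ⟨(0, 0, 0), by simp [normalForm_apply, transversal]⟩
  | mul_right x _ y hy ih =>
    obtain ⟨p, rfl⟩ := ih
    rcases hy with rfl | rfl
    exacts [h.normalForm_mul_s_mem p, h.normalForm_mul_u_mem p]
  | mul_inv_cancel x _ y hy ih =>
    obtain ⟨p, rfl⟩ := ih
    rcases hy with rfl | rfl
    · rw [inv_eq_of_mul_eq_one_right h.s_mul_s]
      exact h.normalForm_mul_s_mem p
    · obtain ⟨q, hq⟩ := h.normalForm_mul_u_mem p
      rw [inv_eq_of_mul_eq_one_right h.u_mul_u_mul_u, ← mul_assoc, ← hq]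
      exact h.normalForm_mul_u_mem q

theorem bijOn_tripleProd (h : G6Relations s u) (hinj : Function.Injective (normalForm s u)) :
    Set.BijOn tripleProd
      (({1, (s * u) ^ 3, ((s * u) ^ 3) ^ 2, ((s * u) ^ 3) ^ 3} : Set G) ×ˢ
        (({1, u, u ^ 2} : Set G) ×ˢ ({1, s, s * u, s * u * s} : Set G)))
      (Subgroup.closure {s, u}) := by
  rw [← range_normalFormFactors, ← h.range_normalForm, normalForm, Set.range_comp]
  exact hinj.injOn_range.bijOn_image

end G6Relations

end G6Relations

namespace Tetra

theorem sq_s : s ^ 2 = 1 := by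
  have := PresentedGroup.one_of_mem (rels := rels) (x := .of 0 ^ 2) (by simp [rels])
  rwa [map_pow] at this

theorem pow_three_t : t ^ 3 = 1 := by
  have := PresentedGroup.one_of_mem (rels := rels) (x := .of 1 ^ 3) (by simp [rels])
  rwa [map_pow] at this

theorem pow_three_u : u ^ 3 = 1 := by
  have := PresentedGroup.one_of_mem (rels := rels) (x := .of 2 ^ 3) (by simp [rels])
  rwa [map_pow] at this

theorem z_eq_t_mul_u_mul_s : z = t * u * s := by
  have := PresentedGroup.mk_eq_mk_of_mul_inv_mem (rels := rels)
    (x := .of 0 * .of 1 * .of 2) (y := .of 1 * .of 2 * .of 0) (by simp [rels])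
  rwa [map_mul, map_mul, map_mul, map_mul] at this

theorem z_eq_u_mul_s_mul_t : z = u * s * t := by
  have := PresentedGroup.mk_eq_mk_of_mul_inv_mem (rels := rels)
    (x := .of 0 * .of 1 * .of 2) (y := .of 2 * .of 0 * .of 1) (by simp [rels])
  rwa [map_mul, map_mul, map_mul, map_mul] at this

theorem commute_z_s : Commute z s :=
  calc z * s = s * (t * u * s) := by rw [z, mul_assoc, mul_assoc, mul_assoc]
    _ = s * z := by rw [← z_eq_t_mul_u_mul_s]

theorem commute_z_t : Commute z t :=
  calc z * t = t * (u * s * t) := by rw [z_eq_t_mul_u_mul_s]; group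
    _ = t * z := by rw [← z_eq_u_mul_s_mul_t]

theorem pow_three_u_mul_s : (u * s) ^ 3 = z ^ 3 := by
  have hus : u * s = z * t⁻¹ := by rw [z_eq_u_mul_s_mul_t]; group
  rw [hus, (commute_z_t.inv_right).mul_pow, inv_pow, pow_three_t, inv_one, mul_one]

theorem pow_three_s_mul_u : (s * u) ^ 3 = z ^ 3 := by
  have : (s * u) ^ 3 * s = s * z ^ 3 := by
    rw [← pow_three_u_mul_s]
    simp only [pow_succ, pow_zero, one_mul, mul_assoc]
  rwa [← (commute_z_s.pow_left 3).eq, mul_left_inj] at this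

theorem g6Relations : G6Relations s u :=
  ⟨sq_s, pow_three_u, pow_three_s_mul_u.trans pow_three_u_mul_s.symm⟩

-- Reduction mod 13 of the reflection representation of `G₇`; `z` acts as the scalar `2`.
def sGL : GL (Fin 2) (ZMod 13) := ⟨!![-1, 0; 0, 1], !![-1, 0; 0, 1], by decide, by decide⟩
def tGL : GL (Fin 2) (ZMod 13) := ⟨!![6, 6; 9, 4], !![6, 6; 9, 4] ^ 2, by decide, by decide⟩
def uGL : GL (Fin 2) (ZMod 13) := ⟨!![2, 3; 2, 10], !![2, 3; 2, 10] ^ 2, by decide, by decide⟩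

theorem lift_rels_eq_one : ∀ r ∈ rels, FreeGroup.lift ![sGL, tGL, uGL] r = 1 := by
  rintro r (rfl | rfl | rfl | rfl | rfl) <;> decide +kernel

def toGL : G7 →* GL (Fin 2) (ZMod 13) := PresentedGroup.toGroup lift_rels_eq_one

theorem toGL_s : toGL s = sGL := PresentedGroup.toGroup.of lift_rels_eq_one

theorem toGL_u : toGL u = uGL := PresentedGroup.toGroup.of lift_rels_eq_one

theorem injective_normalForm_sGL_uGL : Function.Injective (normalForm sGL uGL) := by
  decide +kernel

theorem injective_normalForm : Function.Injective (normalForm s u) := by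
  have hφ : toGL ∘ normalForm s u = normalForm sGL uGL := by
    funext p
    rw [Function.comp_apply, toGL.map_normalForm, toGL_s, toGL_u]
  exact Function.Injective.of_comp (f := toGL) (hφ ▸ injective_normalForm_sGL_uGL)

theorem statement2 :
    Set.BijOn (fun p : G7 × G7 × G7 => p.1 * p.2.1 * p.2.2)
      (({1, z ^ 3, z ^ 6, z ^ 9} : Set G7) ×ˢ (({1, u, u ^ 2} : Set G7) ×ˢ ({1, s, s * u, s * u * s} : Set G7)))
      (G6 : Set G7) := by
  have h := g6Relations.bijOn_tripleProd injective_normalForm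
  rw [pow_three_s_mul_u, ← pow_mul, ← pow_mul] at h
  exact h

end Tetra
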